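/- arXiv:1605.00788 — 2 statements merged into one kernel-verified Lean document; each statement's English description precedes it below -/
import Mathlib

section
/- Let f : ℝⁿ → ℝ be α-exp-concave over a convex set B ⊂ ℝⁿ of diameter D, with ‖∇f(x)‖₂ ≤ G for all x ∈ B. Then for any 0 < η ≤ (1/2)·min{α, 1/(4GD)} and all x, y ∈ B, f(y) ≥ f(x) + ⟨∇f(x), y−x⟩ + (η/2)·(y−x)ᵀ(∇f(x)∇f(x)ᵀ)(y−x). -/
/-!
Exp-concavity of `f` with parameter `α` implies it for every smaller parameter, in particular
for `β = 2η`. The first-order condition for the concave function `exp (-β f)` at `x` gives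
`exp (-β f y) ≤ exp (-β f x) (1 - β t)` with `t = ⟨∇f(x), y - x⟩`, and Cauchy–Schwarz together
with `η ≤ 1/(8GD)` gives `|β t| ≤ 1/4`, where `1 - z ≤ exp (-z - z²/4)`. Taking logarithms yields
`f y ≥ f x + t + (β/4) t²`.
-/

lemma abs_dotProduct_le_sqrt_mul_sqrt {ι : Type*} [Fintype ι] (u v : ι → ℝ) :
    |u ⬝ᵥ v| ≤ √(u ⬝ᵥ u) * √(v ⬝ᵥ v) := by
  have cauchySchwarz (w : ι → ℝ) : w ⬝ᵥ v ≤ √(w ⬝ᵥ w) * √(v ⬝ᵥ v) := by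
    simpa only [dotProduct, sq] using Real.sum_mul_le_sqrt_mul_sqrt Finset.univ w v
  refine abs_le.2 ⟨?_, cauchySchwarz u⟩
  simpa only [neg_dotProduct, dotProduct_neg, neg_neg, neg_le] using cauchySchwarz (-u)

lemma ConcaveOn.rpow {E : Type*} [AddCommGroup E] [Module ℝ E] {s : Set E} {g : E → ℝ}
    (hg : ConcaveOn ℝ s g) (hg₀ : ∀ x ∈ s, 0 ≤ g x) {p : ℝ} (hp₀ : 0 ≤ p) (hp₁ : p ≤ 1) :
    ConcaveOn ℝ s (fun x => g x ^ p) := by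
  refine ⟨hg.1, fun x hx y hy a b ha hb hab => ?_⟩
  calc a • g x ^ p + b • g y ^ p ≤ (a • g x + b • g y) ^ p :=
        (Real.concaveOn_rpow hp₀ hp₁).2 (hg₀ x hx) (hg₀ y hy) ha hb hab
    _ ≤ g (a • x + b • y) ^ p :=
        Real.rpow_le_rpow (add_nonneg (mul_nonneg ha (hg₀ x hx)) (mul_nonneg hb (hg₀ y hy)))
          (hg.2 hx hy ha hb hab) hp₀

lemma ConcaveOn.le_add_of_hasFDerivAt {E : Type*} [NormedAddCommGroup E] [NormedSpace ℝ E]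
    {s : Set E} {g : E → ℝ} (hg : ConcaveOn ℝ s g) {x y : E} (hx : x ∈ s) (hy : y ∈ s)
    {L : E →L[ℝ] ℝ} (hL : HasFDerivAt g L x) : g y ≤ g x + L (y - x) := by
  have hline : ConcaveOn ℝ (Set.Icc (0 : ℝ) 1) (g ∘ AffineMap.lineMap (k := ℝ) x y) :=
    (hg.comp_affineMap _).subset (fun t ht => hg.1.lineMap_mem hx hy ht) (convex_Icc 0 1)
  have hderiv : HasDerivAt (g ∘ AffineMap.lineMap (k := ℝ) x y) (L (y - x)) 0 := by
    simpa using hL.comp_hasDerivAt_of_eq (0 : ℝ) AffineMap.hasDerivAt_lineMap (by simp)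
  have := hline.slope_le_of_hasDerivAt (by simp) (by simp) zero_lt_one hderiv
  simp only [slope_def_field, Function.comp_apply, AffineMap.lineMap_apply_zero,
    AffineMap.lineMap_apply_one, sub_zero, div_one] at this
  linarith

lemma one_sub_le_exp_neg_sub_sq_div_four {z : ℝ} (hz : |z| ≤ 1 / 4) :
    1 - z ≤ Real.exp (-z - z ^ 2 / 4) := by
  set u := -z - z ^ 2 / 4 with hu_def
  obtain ⟨hz₁, hz₂⟩ := abs_le.1 hz
  have hu : |u| ≤ 17 / 64 := abs_le.2 ⟨by nlinarith, by nlinarith⟩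
  -- the cubic Taylor error `(2/9)|u|³` is at most `(17/288) u²` since `|u| ≤ 17/64`
  have htaylor := Real.exp_bound (x := u) (by linarith) (n := 3) (by norm_num)
  norm_num [Finset.sum_range_succ, Nat.factorial] at htaylor
  have hcube : |u| ^ 3 ≤ 17 / 64 * u ^ 2 := by
    rw [pow_succ, sq_abs]; nlinarith [sq_nonneg u]
  have hexp_ge : 1 + u + u ^ 2 / 2 - 17 / 288 * u ^ 2 ≤ Real.exp u := by
    nlinarith [(abs_le.1 htaylor).1]
  have hpoly : 1 - z ≤ 1 + u + u ^ 2 / 2 - 17 / 288 * u ^ 2 := by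
    rw [hu_def]; nlinarith [sq_nonneg z, sq_nonneg (z * z)]
  exact hpoly.trans hexp_ge

def ExpConcaveOn {E : Type*} [AddCommGroup E] [Module ℝ E] (α : ℝ) (s : Set E) (f : E → ℝ) :
    Prop :=
  ConcaveOn ℝ s (fun x => Real.exp (-α * f x))

namespace ExpConcaveOn

lemma of_le {E : Type*} [AddCommGroup E] [Module ℝ E] {s : Set E} {f : E → ℝ} {α β : ℝ}
    (h : ExpConcaveOn α s f) (hβ : 0 < β) (hβα : β ≤ α) : ExpConcaveOn β s f := by
  have hα : 0 < α := hβ.trans_le hβα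
  have hpow : ∀ x, Real.exp (-β * f x) = Real.exp (-α * f x) ^ (β / α) := by
    intro x
    rw [← Real.exp_mul]
    congr 1
    field_simp
  simp only [ExpConcaveOn, hpow]
  exact h.rpow (fun x _ => (Real.exp_pos _).le) (by positivity) ((div_le_one hα).2 hβα)

lemma add_apply_add_sq_le {E : Type*} [NormedAddCommGroup E] [NormedSpace ℝ E] {s : Set E}
    {f : E → ℝ} {β : ℝ} (h : ExpConcaveOn β s f) (hβ : 0 < β) {x y : E} (hx : x ∈ s)
    (hy : y ∈ s) {L : E →L[ℝ] ℝ} (hf : HasFDerivAt f L x) (hsmall : |β * L (y - x)| ≤ 1 / 4) :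
    f x + L (y - x) + β / 4 * L (y - x) ^ 2 ≤ f y := by
  set t := L (y - x)
  have htangent := h.le_add_of_hasFDerivAt hx hy ((hf.const_mul (-β)).exp)
  have hexp_le : Real.exp (-β * f y) ≤ Real.exp (-β * (f x + t + β / 4 * t ^ 2)) :=
    calc Real.exp (-β * f y) ≤ Real.exp (-β * f x) * (1 - β * t) := by
          simp only [_root_.smul_apply, smul_eq_mul] at htangent
          linarith
      _ ≤ Real.exp (-β * f x) * Real.exp (-(β * t) - (β * t) ^ 2 / 4) :=
          mul_le_mul_of_nonneg_left (one_sub_le_exp_neg_sub_sq_div_four hsmall) (Real.exp_pos _).le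
      _ = Real.exp (-β * (f x + t + β / 4 * t ^ 2)) := by rw [← Real.exp_add]; ring_nf
  exact le_of_mul_le_mul_left (by linarith [Real.exp_le_exp.1 hexp_le]) hβ

end ExpConcaveOn

theorem stmt0_general {n : ℕ} (B : Set (Fin n → ℝ))
    (f : (Fin n → ℝ) → ℝ) (gradf : (Fin n → ℝ) → (Fin n → ℝ))
    (α D G η : ℝ)
    (hexp : ConcaveOn ℝ B (fun x => Real.exp (-α * f x)))
    (hdiam : ∀ x ∈ B, ∀ y ∈ B, Real.sqrt ((x - y) ⬝ᵥ (x - y)) ≤ D)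
    (hgrad : ∀ x ∈ B, ∃ L : (Fin n → ℝ) →L[ℝ] ℝ, HasFDerivAt f L x ∧ ∀ y, L y = gradf x ⬝ᵥ y)
    (hG : ∀ x ∈ B, Real.sqrt (gradf x ⬝ᵥ gradf x) ≤ G)
    (hη : 0 < η) (hη2 : η ≤ (1/2) * min α (1/(4*G*D)))
    (x y : Fin n → ℝ) (hx : x ∈ B) (hy : y ∈ B) :
    f y ≥ f x + gradf x ⬝ᵥ (y - x) + η/2 * (gradf x ⬝ᵥ (y - x))^2 := by
  obtain ⟨L, hL, hLgrad⟩ := hgrad x hx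
  have hmin : 0 < min α (1 / (4 * G * D)) := by linarith
  have hηα : 2 * η ≤ α := by linarith [min_le_left α (1 / (4 * G * D))]
  have hGD : 0 < 4 * G * D := one_div_pos.1 (hmin.trans_le (min_le_right _ _))
  have hηGD : 2 * η * (4 * G * D) ≤ 1 := by
    rw [← le_div_iff₀ hGD]; linarith [min_le_right α (1 / (4 * G * D))]
  have hslope : |gradf x ⬝ᵥ (y - x)| ≤ G * D := by
    rw [← neg_sub x y, dotProduct_neg, abs_neg]
    have := abs_dotProduct_le_sqrt_mul_sqrt (gradf x) (x - y)
    have := mul_le_mul (hG x hx) (hdiam x hx y hy) (Real.sqrt_nonneg _)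
      ((Real.sqrt_nonneg _).trans (hG x hx))
    linarith
  have hsmall : |2 * η * L (y - x)| ≤ 1 / 4 := by
    rw [hLgrad, abs_mul, abs_of_pos (by positivity : 0 < 2 * η)]
    calc 2 * η * |gradf x ⬝ᵥ (y - x)| ≤ 2 * η * (G * D) := by gcongr
      _ ≤ 1 / 4 := by linarith
  have := (ExpConcaveOn.of_le hexp (by positivity) hηα).add_apply_add_sq_le (by positivity)
    hx hy hL hsmall
  rw [hLgrad] at this
  linarith

theorem stmt0 {n : ℕ} (B : Set (Fin n → ℝ)) (hB : Convex ℝ B)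
    (f : (Fin n → ℝ) → ℝ) (gradf : (Fin n → ℝ) → (Fin n → ℝ))
    (α D G η : ℝ) (hα : 0 < α)
    (hexp : ConcaveOn ℝ B (fun x => Real.exp (-α * f x)))
    (hdiam : ∀ x ∈ B, ∀ y ∈ B, Real.sqrt ((x - y) ⬝ᵥ (x - y)) ≤ D)
    (hgrad : ∀ x ∈ B, ∃ L : (Fin n → ℝ) →L[ℝ] ℝ, HasFDerivAt f L x ∧ ∀ y, L y = gradf x ⬝ᵥ y)
    (hG : ∀ x ∈ B, Real.sqrt (gradf x ⬝ᵥ gradf x) ≤ G)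
    (hη : 0 < η) (hη2 : η ≤ (1/2) * min α (1/(4*G*D)))
    (x y : Fin n → ℝ) (hx : x ∈ B) (hy : y ∈ B) :
    f y ≥ f x + gradf x ⬝ᵥ (y - x) + η/2 * (gradf x ⬝ᵥ (y - x))^2 :=
  stmt0_general B f gradf α D G η hexp hdiam hgrad hG hη hη2 x y hx hy
end

section
/- Let g₁,…,g_T be vectors in ℝⁿ with ‖g_t‖₂ ≤ G. Define A₀ = ε·Iₙ with ε > 0 and A_t = A_{t−1} + g_t g_tᵀ. Then ∑_{t=1}^T g_tᵀ A_t^{−1} g_t ≤ n·log(1 + T·G²/(n·ε)). -/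
/-!
By the matrix determinant lemma, `det A_{t-1} = det A_t * (1 - g_tᵀ A_t⁻¹ g_t)`, so
`log x ≤ x - 1` bounds each term by `log det A_t - log det A_{t-1}` and the sum telescopes to
`log (det A_T / det A_0)`. AM-GM on the eigenvalues gives `det A_T ≤ (tr A_T / n) ^ n`, and
`tr A_T ≤ n ε + T G²` since each update adds `‖g_t‖² ≤ G²` to the trace.
-/

open Matrix

theorem Real.prod_le_sum_div_card_pow {ι : Type*} (s : Finset ι) (z : ι → ℝ)
    (hz : ∀ i ∈ s, 0 ≤ z i) :
    ∏ i ∈ s, z i ≤ ((∑ i ∈ s, z i) / s.card) ^ s.card := by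
  rcases s.eq_empty_or_nonempty with rfl | hs
  · simp
  have hcard : s.card ≠ 0 := hs.card_pos.ne'
  have amgm := Real.geom_mean_le_arith_mean s (fun _ ↦ 1) z (by simp) (by simpa using hs) hz
  simp only [Real.rpow_one, Finset.sum_const, nsmul_eq_mul, mul_one, one_mul] at amgm
  calc ∏ i ∈ s, z i = ((∏ i ∈ s, z i) ^ ((s.card : ℝ)⁻¹)) ^ s.card :=
        (Real.rpow_inv_natCast_pow (Finset.prod_nonneg hz) hcard).symm
    _ ≤ ((∑ i ∈ s, z i) / s.card) ^ s.card :=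
        pow_le_pow_left₀ (Real.rpow_nonneg (Finset.prod_nonneg hz) _) amgm _

namespace Matrix

variable {m : Type*} [Fintype m] [DecidableEq m]

theorem PosSemidef.det_le_trace_div_card_pow {M : Matrix m m ℝ} (hM : M.PosSemidef) :
    M.det ≤ (M.trace / Fintype.card m) ^ Fintype.card m := by
  rw [hM.isHermitian.det_eq_prod_eigenvalues, hM.isHermitian.trace_eq_sum_eigenvalues]
  simpa using Real.prod_le_sum_div_card_pow Finset.univ _ fun i _ ↦ hM.eigenvalues_nonneg i

theorem det_sub_vecMulVec {K : Type*} [Field K] {B : Matrix m m K} (hB : B.det ≠ 0)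
    (u v : m → K) :
    (B - vecMulVec u v).det = B.det * (1 - v ⬝ᵥ B⁻¹ *ᵥ u) := by
  have hrank : B - vecMulVec u v = B + replicateCol Unit (-u) * replicateRow Unit v := by
    rw [← vecMulVec_eq, neg_vecMulVec, sub_eq_add_neg]
  rw [hrank, det_add_replicateCol_mul_replicateRow hB.isUnit, Matrix.mul_assoc,
    ← replicateCol_mulVec]
  simp [sub_eq_add_neg, mulVec_neg]

theorem PosDef.dotProduct_inv_add_vecMulVec_mulVec_le {A : Matrix m m ℝ} (hA : A.PosDef)
    (v : m → ℝ) :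
    v ⬝ᵥ (A + vecMulVec v v)⁻¹ *ᵥ v ≤
      Real.log (A + vecMulVec v v).det - Real.log A.det := by
  set B := A + vecMulVec v v
  have hB : B.PosDef := hA.add_posSemidef (posSemidef_vecMulVec_self_star v)
  have hdet : A.det = B.det * (1 - v ⬝ᵥ B⁻¹ *ᵥ v) := by
    rw [← det_sub_vecMulVec hB.det_pos.ne', add_sub_cancel_right]
  have hratio : A.det / B.det = 1 - v ⬝ᵥ B⁻¹ *ᵥ v := by
    rw [hdet, mul_div_cancel_left₀ _ hB.det_pos.ne']
  have hlog := Real.log_le_sub_one_of_pos (div_pos hA.det_pos hB.det_pos)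
  rw [Real.log_div hA.det_pos.ne' hB.det_pos.ne', hratio] at hlog
  linarith

end Matrix

section RankOneUpdates

variable {m : Type*} [Fintype m] {g : ℕ → m → ℝ} {A : ℕ → Matrix m m ℝ}

theorem posDef_of_add_vecMulVec_self (h0 : (A 0).PosDef)
    (hA : ∀ t, A (t + 1) = A t + vecMulVec (g (t + 1)) (g (t + 1))) (t : ℕ) : (A t).PosDef := by
  induction t with
  | zero => exact h0
  | succ t ih => rw [hA]; exact ih.add_posSemidef (posSemidef_vecMulVec_self_star _)

theorem sum_dotProduct_inv_mulVec_le_log_det_sub [DecidableEq m] (h0 : (A 0).PosDef)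
    (hA : ∀ t, A (t + 1) = A t + vecMulVec (g (t + 1)) (g (t + 1))) (T : ℕ) :
    ∑ t ∈ Finset.Icc 1 T, g t ⬝ᵥ (A t)⁻¹ *ᵥ g t ≤
      Real.log (A T).det - Real.log (A 0).det := by
  induction T with
  | zero => simp
  | succ T ih =>
    have hstep := (posDef_of_add_vecMulVec_self h0 hA T).dotProduct_inv_add_vecMulVec_mulVec_le
      (g (T + 1))
    rw [← hA] at hstep
    rw [Finset.sum_Icc_succ_top (by omega)]
    linarith

theorem trace_le_of_add_vecMulVec_self {C : ℝ} (hg : ∀ t, g t ⬝ᵥ g t ≤ C)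
    (hA : ∀ t, A (t + 1) = A t + vecMulVec (g (t + 1)) (g (t + 1))) (T : ℕ) :
    (A T).trace ≤ (A 0).trace + T * C := by
  induction T with
  | zero => simp
  | succ T ih =>
    rw [hA, trace_add, trace_vecMulVec]
    push_cast
    linarith [hg (T + 1)]

end RankOneUpdates

theorem stmt1 {n : ℕ} (T : ℕ) (g : ℕ → (Fin n → ℝ)) (G ε : ℝ) (hε : 0 < ε)
    (hG : ∀ t, Real.sqrt (g t ⬝ᵥ g t) ≤ G)
    (A : ℕ → Matrix (Fin n) (Fin n) ℝ)
    (hA0 : A 0 = ε • (1 : Matrix (Fin n) (Fin n) ℝ))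
    (hAt : ∀ t : ℕ, A (t+1) = A t + Matrix.vecMulVec (g (t+1)) (g (t+1))) :
    ∑ t ∈ Finset.Icc 1 T, g t ⬝ᵥ (A t)⁻¹.mulVec (g t) ≤
      n * Real.log (1 + T * G^2 / (n * ε)) := by
  have h0 : (A 0).PosDef := hA0 ▸ PosDef.one.smul hε
  have hpos := posDef_of_add_vecMulVec_self h0 hAt T
  have htrace : (A T).trace ≤ ε * n + T * G ^ 2 := by
    have hg t : g t ⬝ᵥ g t ≤ G ^ 2 := (Real.sqrt_le_iff.mp (hG t)).2
    simpa [hA0] using trace_le_of_add_vecMulVec_self hg hAt T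
  have hmean : (A T).trace / n ≤ ε * (1 + T * G ^ 2 / (n * ε)) := by
    rcases n.eq_zero_or_pos with rfl | hn
    · simpa using hε.le
    rw [div_le_iff₀ (by positivity)]
    calc (A T).trace ≤ ε * n + T * G ^ 2 := htrace
      _ = ε * (1 + T * G ^ 2 / (n * ε)) * n := by field_simp
  have hdet : (A T).det ≤ ε ^ n * (1 + T * G ^ 2 / (n * ε)) ^ n := by
    calc (A T).det ≤ ((A T).trace / n) ^ n := by
          simpa using hpos.posSemidef.det_le_trace_div_card_pow
      _ ≤ (ε * (1 + T * G ^ 2 / (n * ε))) ^ n := by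
          gcongr
          exact div_nonneg hpos.posSemidef.trace_nonneg n.cast_nonneg
      _ = _ := mul_pow _ _ _
  have hdet0 : (A 0).det = ε ^ n := by simp [hA0]
  calc ∑ t ∈ Finset.Icc 1 T, g t ⬝ᵥ (A t)⁻¹ *ᵥ g t
      ≤ Real.log (A T).det - Real.log (A 0).det :=
        sum_dotProduct_inv_mulVec_le_log_det_sub h0 hAt T
    _ ≤ Real.log (ε ^ n * (1 + T * G ^ 2 / (n * ε)) ^ n) - Real.log (ε ^ n) := by
      rw [hdet0]; gcongr; exact hpos.det_pos
    _ = n * Real.log (1 + T * G ^ 2 / (n * ε)) := by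
      rw [Real.log_mul (by positivity) (by positivity), add_sub_cancel_left, Real.log_pow]
end
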